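/- arXiv:math/0008020 — 4 statements merged into one kernel-verified Lean document; each statement's English description precedes it below -/
import Mathlib

section
/- Let n ≥ 1 and let a, b be partitions of n. Then in the dominance lattice L_B(n+1) one has sup(a^{↓1}, b^{↓1}) = (sup_{L_B(n)}(a,b))^{↓1}. Consequently the set {s^{↓1} : s ∈ L_B(n)} is a sublattice of L_B(n+1). -/
/-!
Partitions are modelled as functions `s : ℕ → ℕ` (0-based: `s 0` is the first
part `s_1`), nonincreasing and eventually zero.  A paper index `i ≥ 1`
(columns, transitions `→_i`, increments `s^{↓i}`) corresponds to the Lean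
index `i - 1`.
-/

/-- `s` is a partition: nonincreasing and eventually zero. -/
def IsPartition (s : ℕ → ℕ) : Prop :=
  (∀ i, s (i + 1) ≤ s i) ∧ ∃ N, ∀ i, N ≤ i → s i = 0

/-- `j`-th suffix sum (0-based: `suff s 0` is the total sum `|s|`,
`suff s (j-1)` is the paper's `Σ_j`). -/
noncomputable def suff (s : ℕ → ℕ) (j : ℕ) : ℕ := ∑' i, s (j + i)

/-- `s` is a partition of `n`. -/
noncomputable def IsPartOf (n : ℕ) (s : ℕ → ℕ) : Prop := IsPartition s ∧ suff s 0 = n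

/-- Prefix sum of the first `j` parts. -/
def psum (s : ℕ → ℕ) (j : ℕ) : ℕ := ∑ i ∈ Finset.range j, s i

/-- Dominance ordering: `Dom s t` means `s ≥ t`, i.e. every prefix sum of `s`
is at least the corresponding prefix sum of `t`. -/
def Dom (s t : ℕ → ℕ) : Prop := ∀ j, psum t j ≤ psum s j

/-- `s^{↓(i+1)}`: add one grain on the (0-based) `i`-th column. -/
def incr (s : ℕ → ℕ) (i : ℕ) : ℕ → ℕ := Function.update s i (s i + 1)

/-- Move one grain from column `a` to column `b` (0-based). -/
def moveGrain (s : ℕ → ℕ) (a b : ℕ) : ℕ → ℕ :=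
  fun j => if j = a then s a - 1 else if j = b then s b + 1 else s j

/-- `s` has a cliff at (0-based) column `i`: `s_i ≥ s_{i+1} + 2`. -/
def Cliff (s : ℕ → ℕ) (i : ℕ) : Prop := s (i + 1) + 2 ≤ s i

/-- `s` has a slippery step at (0-based) column `i`, the plateau ending at
(0-based) column `m`:  `s_i - 1 = s_{i+1} = ⋯ = s_m = s_{m+1} + 1` (in 0-based
indices), with `m ≥ i + 1`. -/
def SlipAt (s : ℕ → ℕ) (i m : ℕ) : Prop :=
  i + 1 ≤ m ∧ (∀ j, i + 1 ≤ j → j ≤ m → s j + 1 = s i) ∧ s (m + 1) + 2 = s i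

/-- The transition `s →_{i+1} t` of the paper (0-based `i`): a fall from a
cliff at `i`, or a slip from a slippery step at `i` (the grain landing just
after the plateau). -/
def Step (s : ℕ → ℕ) (i : ℕ) (t : ℕ → ℕ) : Prop :=
  (Cliff s i ∧ t = moveGrain s i (i + 1)) ∨
  (∃ m, SlipAt s i m ∧ t = moveGrain s i (m + 1))

/-- The set of configurations directly reachable from `s`. -/
def dirreach (s : ℕ → ℕ) : Set (ℕ → ℕ) := {t | ∃ i, Step s i t}

/-- `s` has a (slippery, if `l ≥ 2`) plateau of length `l` at `1`:
`s_1 = s_2 = ⋯ = s_l = s_{l+1} + 1`. -/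
def SlipperyPlateau1 (s : ℕ → ℕ) (l : ℕ) : Prop :=
  (∀ j, j < l → s j = s 0) ∧ s l + 1 = s 0

/-- `s` has a non-slippery plateau at `1`:
`s_1 = ⋯ = s_l ≥ s_{l+1} + 2` for some `l ≥ 2`. -/
def NonSlipperyPlateau1 (s : ℕ → ℕ) : Prop :=
  ∃ l, 2 ≤ l ∧ (∀ j, j < l → s j = s 0) ∧ s l + 2 ≤ s 0

/-- `s` has a slippery step at `1`. -/
def SlipperyStep1 (s : ℕ → ℕ) : Prop := ∃ m, SlipAt s 0 m

/-- `s` has a non-slippery step at `1`: `s_1 = s_2 + 1` and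
`s_2 = ⋯ = s_m ≥ s_{m+1} + 2` for some `m ≥ 2` (here `m` is 0-based, `≥ 1`). -/
def NonSlipperyStep1 (s : ℕ → ℕ) : Prop :=
  s 0 = s 1 + 1 ∧ ∃ m, 1 ≤ m ∧ (∀ j, 1 ≤ j → j ≤ m → s j = s 1) ∧ s (m + 1) + 2 ≤ s 1

/-- `c` is the infimum of `a` and `b` in the dominance lattice `L_B(n)`. -/
noncomputable def IsInfOn (n : ℕ) (a b c : ℕ → ℕ) : Prop :=
  IsPartOf n c ∧ Dom a c ∧ Dom b c ∧ ∀ d, IsPartOf n d → Dom a d → Dom b d → Dom c d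

/-- `c` is the supremum of `a` and `b` in the dominance lattice `L_B(n)`. -/
noncomputable def IsSupOn (n : ℕ) (a b c : ℕ → ℕ) : Prop :=
  IsPartOf n c ∧ Dom c a ∧ Dom c b ∧ ∀ d, IsPartOf n d → Dom d a → Dom d b → Dom d c

/-- The order `≥_∞` on the set `P` of all partitions: `GeInf s t` means
`s ≥_∞ t`, i.e. every suffix sum of `s` is at most that of `t`. -/
noncomputable def GeInf (s t : ℕ → ℕ) : Prop := ∀ j, suff s j ≤ suff t j

/-- `c` is the infimum of `a` and `b` in `(P, ≥_∞)`. -/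
noncomputable def IsInfP (a b c : ℕ → ℕ) : Prop :=
  IsPartition c ∧ GeInf a c ∧ GeInf b c ∧
    ∀ d, IsPartition d → GeInf a d → GeInf b d → GeInf c d

/-- `c` is the supremum of `a` and `b` in `(P, ≥_∞)`. -/
noncomputable def IsSupP (a b c : ℕ → ℕ) : Prop :=
  IsPartition c ∧ GeInf c a ∧ GeInf c b ∧
    ∀ d, IsPartition d → GeInf d a → GeInf d b → GeInf d c

/-- The map `π`: delete the first part, `(s_1, s_2, …) ↦ (s_2, …)`. -/
def shift (s : ℕ → ℕ) : ℕ → ℕ := fun i => s (i + 1)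

/-!
Everything is read off prefix sums: a sequence is nonincreasing iff its prefix sums are concave,
so the pointwise minimum of the prefix sums of two partitions of `n` is the prefix-sum sequence of
their meet, and `s ↦ s^{↓1}`, which adds `1` to every nonzero prefix sum, commutes with it.

For suprema let `M = max(a₁, b₁)`. The partition `(M, …, M, r)` of `n` dominates `a` and `b`, and
any `w` with `a^{↓1}, b^{↓1} ≤ w ≤ (M, …, M, r)^{↓1}` has `w₁ = M + 1 > M ≥ w₂`, so `w = e^{↓1}` for
a partition `e` of `n` dominating `a` and `b`. Applied to the supremum of `a^{↓1}, b^{↓1}` this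
gives closure under sup; applied to the meet of an arbitrary upper bound of `a^{↓1}, b^{↓1}` with
`(M, …, M, r)^{↓1}` it shows that `sup(a, b)^{↓1}` lies below every such upper bound.
-/

lemma psum_zero (s : ℕ → ℕ) : psum s 0 = 0 := rfl

lemma psum_succ (s : ℕ → ℕ) (j : ℕ) : psum s (j + 1) = psum s j + s j :=
  Finset.sum_range_succ s j

lemma psum_one (s : ℕ → ℕ) : psum s 1 = s 0 := by
  simp [psum_succ, psum_zero]

lemma psum_two (s : ℕ → ℕ) : psum s 2 = s 0 + s 1 := by
  rw [psum_succ, psum_one]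

lemma psum_mono (s : ℕ → ℕ) : Monotone (psum s) :=
  monotone_nat_of_le_succ fun j => by rw [psum_succ]; omega

lemma psum_le_mul {s : ℕ → ℕ} (hs : ∀ i, s (i + 1) ≤ s i) (j : ℕ) :
    psum s j ≤ j * s 0 := by
  induction j with
  | zero => simp [psum_zero]
  | succ j ih =>
    have : s j ≤ s 0 := antitone_nat_of_succ_le hs (Nat.zero_le j)
    rw [psum_succ, Nat.succ_mul]
    omega

lemma eq_of_psum_eq {s t : ℕ → ℕ} (h : ∀ j, psum s j = psum t j) : s = t := by
  funext j
  have := h (j + 1)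
  rw [psum_succ, psum_succ, h j] at this
  omega

lemma psum_incr {s : ℕ → ℕ} {j : ℕ} (hj : 1 ≤ j) : psum (incr s 0) j = psum s j + 1 := by
  induction j, hj using Nat.le_induction with
  | base => simp [psum_one, incr]
  | succ j hj ih =>
    rw [psum_succ, psum_succ, ih, incr, Function.update_of_ne (by omega)]
    omega

lemma Dom.trans {s t u : ℕ → ℕ} (hst : Dom s t) (htu : Dom t u) : Dom s u :=
  fun j => (htu j).trans (hst j)

lemma Dom.antisymm {s t : ℕ → ℕ} (hst : Dom s t) (hts : Dom t s) : s = t :=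
  eq_of_psum_eq fun j => le_antisymm (hts j) (hst j)

lemma Dom.first_le {s t : ℕ → ℕ} (h : Dom s t) : t 0 ≤ s 0 := by
  simpa [psum_one] using h 1

lemma dom_incr_iff {s t : ℕ → ℕ} : Dom (incr s 0) (incr t 0) ↔ Dom s t := by
  constructor <;> intro h j
  · rcases Nat.eq_zero_or_pos j with rfl | hj
    · exact le_rfl
    · have := h j
      rwa [psum_incr hj, psum_incr hj, Nat.add_le_add_iff_right] at this
  · rcases Nat.eq_zero_or_pos j with rfl | hj
    · exact le_rfl
    · rw [psum_incr hj, psum_incr hj]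
      exact Nat.add_le_add_right (h j) 1

lemma isPartOf_iff {n : ℕ} {s : ℕ → ℕ} :
    IsPartOf n s ↔ (∀ i, s (i + 1) ≤ s i) ∧ ∃ M, ∀ j, M ≤ j → psum s j = n := by
  have suff_eq : ∀ M, (∀ i, M ≤ i → s i = 0) → suff s 0 = psum s M := fun M hM => by
    simp only [suff, psum, zero_add]
    exact tsum_eq_sum fun i hi => hM i (by simpa using hi)
  have psum_eq : ∀ M, (∀ i, M ≤ i → s i = 0) → ∀ j, M ≤ j → psum s j = psum s M :=
    fun M hM j hj => by
      induction j, hj using Nat.le_induction with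
      | base => rfl
      | succ j hj ih => rw [psum_succ, ih, hM j hj, add_zero]
  constructor
  · rintro ⟨⟨hanti, M, hM⟩, hsum⟩
    exact ⟨hanti, M, fun j hj => by rw [psum_eq M hM j hj, ← suff_eq M hM, hsum]⟩
  · rintro ⟨hanti, M, hM⟩
    have hzero : ∀ i, M ≤ i → s i = 0 := fun i hi => by
      have := psum_succ s i
      rw [hM i hi, hM (i + 1) (by omega)] at this
      omega
    exact ⟨⟨hanti, M, hzero⟩, by rw [suff_eq M hzero, hM M le_rfl]⟩

lemma IsPartOf.psum_le {n : ℕ} {s : ℕ → ℕ} (hs : IsPartOf n s) (j : ℕ) :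
    psum s j ≤ n := by
  obtain ⟨-, M, hM⟩ := isPartOf_iff.1 hs
  calc psum s j ≤ psum s (max j M) := psum_mono s (le_max_left _ _)
    _ = n := hM _ (le_max_right _ _)

lemma IsPartOf.first_pos {n : ℕ} {s : ℕ → ℕ} (hs : IsPartOf n s) (hn : 1 ≤ n) :
    0 < s 0 := by
  obtain ⟨hanti, M, hM⟩ := isPartOf_iff.1 hs
  have := psum_le_mul hanti M
  rw [hM M le_rfl] at this
  exact Nat.pos_of_ne_zero fun h => by rw [h, mul_zero] at this; omega

lemma IsPartOf.incr_zero {n : ℕ} {s : ℕ → ℕ} (hs : IsPartOf n s) :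
    IsPartOf (n + 1) (incr s 0) := by
  obtain ⟨hanti, M, hM⟩ := isPartOf_iff.1 hs
  refine isPartOf_iff.2
    ⟨fun i => ?_, M + 1, fun j hj => by rw [psum_incr (by omega), hM j (by omega)]⟩
  rcases Nat.eq_zero_or_pos i with rfl | hi
  · simpa [incr] using Nat.le_succ_of_le (hanti 0)
  · simpa [incr, Function.update_of_ne (show i ≠ 0 by omega)] using hanti i

lemma exists_eq_incr {n : ℕ} {z : ℕ → ℕ} (hz : IsPartOf (n + 1) z) (h : z 1 < z 0) :
    ∃ s, IsPartOf n s ∧ z = incr s 0 := by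
  set s := Function.update z 0 (z 0 - 1)
  have hzs : z = incr s 0 := by
    simp only [s, incr, Function.update_self, Function.update_idem]
    rw [Nat.sub_add_cancel (by omega), Function.update_eq_self]
  obtain ⟨hanti, M, hM⟩ := isPartOf_iff.1 hz
  refine ⟨s, isPartOf_iff.2 ⟨fun i => ?_, M + 1, fun j hj => ?_⟩, hzs⟩
  · rcases Nat.eq_zero_or_pos i with rfl | hi
    · change s 1 ≤ s 0
      simp only [s, Function.update_self, Function.update_of_ne one_ne_zero]
      omega
    · simpa [s, Function.update_of_ne (show i ≠ 0 by omega)] using hanti i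
  · have := hM j (by omega)
    rw [hzs, psum_incr (by omega)] at this
    omega

def ofPsum (P : ℕ → ℕ) : ℕ → ℕ := fun j => P (j + 1) - P j

lemma psum_ofPsum {P : ℕ → ℕ} (h0 : P 0 = 0) (hP : Monotone P) (j : ℕ) :
    psum (ofPsum P) j = P j := by
  induction j with
  | zero => exact h0.symm
  | succ j ih =>
    have := hP (j.le_add_right 1)
    rw [psum_succ, ih, ofPsum]
    omega

lemma isPartOf_ofPsum {n : ℕ} {P : ℕ → ℕ} (h0 : P 0 = 0) (hP : Monotone P)
    (hconc : ∀ j, P (j + 2) + P j ≤ 2 * P (j + 1)) (hn : ∃ M, ∀ j, M ≤ j → P j = n) :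
    IsPartOf n (ofPsum P) := by
  refine isPartOf_iff.2 ⟨fun i => ?_, by simpa only [psum_ofPsum h0 hP] using hn⟩
  have := hconc i
  have := hP (i.le_add_right 1)
  have := hP ((i + 1).le_add_right 1)
  change P (i + 2) - P (i + 1) ≤ P (i + 1) - P i
  omega

def domInf (s t : ℕ → ℕ) : ℕ → ℕ := ofPsum fun j => min (psum s j) (psum t j)

lemma psum_domInf (s t : ℕ → ℕ) (j : ℕ) :
    psum (domInf s t) j = min (psum s j) (psum t j) :=
  psum_ofPsum (by simp [psum_zero]) ((psum_mono s).min (psum_mono t)) j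

lemma IsPartOf.domInf {n : ℕ} {s t : ℕ → ℕ} (hs : IsPartOf n s) (ht : IsPartOf n t) :
    IsPartOf n (domInf s t) := by
  obtain ⟨hs_anti, Ms, hMs⟩ := isPartOf_iff.1 hs
  obtain ⟨ht_anti, Mt, hMt⟩ := isPartOf_iff.1 ht
  refine isPartOf_ofPsum (by simp [psum_zero]) ((psum_mono s).min (psum_mono t)) (fun j => ?_)
    ⟨max Ms Mt, fun j hj => by rw [hMs j (by omega), hMt j (by omega), min_self]⟩
  have := hs_anti j
  have := ht_anti j
  rw [psum_succ s (j + 1), psum_succ t (j + 1), psum_succ s j, psum_succ t j]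
  omega

lemma dom_domInf_left (s t : ℕ → ℕ) : Dom s (domInf s t) := fun j => by
  rw [psum_domInf]; exact min_le_left _ _

lemma dom_domInf_right (s t : ℕ → ℕ) : Dom t (domInf s t) := fun j => by
  rw [psum_domInf]; exact min_le_right _ _

lemma Dom.domInf {s t u : ℕ → ℕ} (hs : Dom s u) (ht : Dom t u) :
    Dom (domInf s t) u := fun j => by
  rw [psum_domInf]; exact le_min (hs j) (ht j)

lemma incr_domInf (s t : ℕ → ℕ) : domInf (incr s 0) (incr t 0) = incr (domInf s t) 0 := by
  refine eq_of_psum_eq fun j => ?_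
  rcases Nat.eq_zero_or_pos j with rfl | hj
  · rfl
  · rw [psum_domInf, psum_incr hj, psum_incr hj, psum_incr hj, psum_domInf, min_add_add_right]

/-- `(M, …, M, r)`: the largest partition of `n` in the dominance order with all parts at most
`M`. -/
def greedyPart (n M : ℕ) : ℕ → ℕ := ofPsum fun j => min n (j * M)

lemma psum_greedyPart (n M j : ℕ) : psum (greedyPart n M) j = min n (j * M) :=
  psum_ofPsum (by simp) (fun _ _ h => min_le_min_left n (Nat.mul_le_mul_right M h)) j

lemma isPartOf_greedyPart (n : ℕ) {M : ℕ} (hM : 0 < M) : IsPartOf n (greedyPart n M) := by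
  refine isPartOf_ofPsum (by simp) (fun _ _ h => min_le_min_left n (Nat.mul_le_mul_right M h))
    (fun j => ?_) ⟨n, fun j hj => min_eq_left (le_trans hj (Nat.le_mul_of_pos_right j hM))⟩
  rw [show (j + 2) * M = j * M + M + M by ring, show (j + 1) * M = j * M + M by ring]
  omega

lemma dom_greedyPart {n M : ℕ} {s : ℕ → ℕ} (hs : IsPartOf n s) (hM : s 0 ≤ M) :
    Dom (greedyPart n M) s := fun j => by
  rw [psum_greedyPart]
  exact le_min (hs.psum_le j)
    ((psum_le_mul (isPartOf_iff.1 hs).1 j).trans (Nat.mul_le_mul_left j hM))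

lemma second_lt_first_of_dom {n : ℕ} {a b w : ℕ → ℕ} (ha : Dom w (incr a 0))
    (hb : Dom w (incr b 0)) (hw : Dom (incr (greedyPart n (max (a 0) (b 0))) 0) w) :
    w 1 < w 0 := by
  have h1 := ha.first_le
  have h2 := hb.first_le
  have h3 := hw 2
  simp only [incr, Function.update_self] at h1 h2
  rw [psum_two, psum_incr (by norm_num), psum_greedyPart] at h3
  omega

lemma upperBound_incr_greedyPart {n : ℕ} (hn : 1 ≤ n) {a b : ℕ → ℕ} (ha : IsPartOf n a)
    (hb : IsPartOf n b) :
    IsPartOf (n + 1) (incr (greedyPart n (max (a 0) (b 0))) 0) ∧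
      Dom (incr (greedyPart n (max (a 0) (b 0))) 0) (incr a 0) ∧
      Dom (incr (greedyPart n (max (a 0) (b 0))) 0) (incr b 0) :=
  ⟨(isPartOf_greedyPart n (lt_max_of_lt_left (ha.first_pos hn))).incr_zero,
    dom_incr_iff.2 (dom_greedyPart ha (le_max_left _ _)),
    dom_incr_iff.2 (dom_greedyPart hb (le_max_right _ _))⟩

lemma IsInfOn.eq_domInf {N : ℕ} {x y z : ℕ → ℕ} (hx : IsPartOf N x) (hy : IsPartOf N y)
    (hz : IsInfOn N x y z) : z = domInf x y := by
  obtain ⟨-, hxz, hyz, hz_greatest⟩ := hz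
  exact (hz_greatest _ (hx.domInf hy) (dom_domInf_left x y) (dom_domInf_right x y)).antisymm
    (hxz.domInf hyz)

lemma exists_eq_incr_of_isSupOn {n : ℕ} (hn : 1 ≤ n) {a b z : ℕ → ℕ} (ha : IsPartOf n a)
    (hb : IsPartOf n b) (hz : IsSupOn (n + 1) (incr a 0) (incr b 0) z) :
    ∃ e, IsPartOf n e ∧ z = incr e 0 := by
  obtain ⟨hz, hza, hzb, hz_least⟩ := hz
  obtain ⟨hG, hGa, hGb⟩ := upperBound_incr_greedyPart hn ha hb
  exact exists_eq_incr hz <| second_lt_first_of_dom hza hzb <| hz_least _ hG hGa hGb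

lemma isSupOn_incr {n : ℕ} (hn : 1 ≤ n) {a b c : ℕ → ℕ} (ha : IsPartOf n a)
    (hb : IsPartOf n b) (hc : IsSupOn n a b c) :
    IsSupOn (n + 1) (incr a 0) (incr b 0) (incr c 0) := by
  obtain ⟨hc, hca, hcb, hc_least⟩ := hc
  refine ⟨hc.incr_zero, dom_incr_iff.2 hca, dom_incr_iff.2 hcb, fun d hd hda hdb => ?_⟩
  set G := incr (greedyPart n (max (a 0) (b 0))) 0
  obtain ⟨hG, hGa, hGb⟩ := upperBound_incr_greedyPart hn ha hb
  obtain ⟨e, he, hwe⟩ := exists_eq_incr (hd.domInf hG) <|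
    second_lt_first_of_dom (hda.domInf hGa) (hdb.domInf hGb) (dom_domInf_right d G)
  have hde : Dom d (incr e 0) := hwe ▸ dom_domInf_left d G
  have hea : Dom e a := dom_incr_iff.1 (hwe ▸ hda.domInf hGa)
  have heb : Dom e b := dom_incr_iff.1 (hwe ▸ hdb.domInf hGb)
  exact hde.trans (dom_incr_iff.2 (hc_least e he hea heb))

/-- For `n ≥ 1`: suprema are preserved by adding one grain on
the first column, and consequently `{s^{↓1} : s ∈ L_B(n)}` is a sublattice of
`L_B(n+1)` (closed under `inf` and `sup`). -/
theorem stmt1 (n : ℕ) (hn : 1 ≤ n) :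
    (∀ a b c : ℕ → ℕ, IsPartOf n a → IsPartOf n b → IsSupOn n a b c →
      IsSupOn (n + 1) (incr a 0) (incr b 0) (incr c 0)) ∧
    (∀ x y z : ℕ → ℕ,
      (∃ s, IsPartOf n s ∧ x = incr s 0) → (∃ s, IsPartOf n s ∧ y = incr s 0) →
      IsInfOn (n + 1) x y z → ∃ s, IsPartOf n s ∧ z = incr s 0) ∧
    (∀ x y z : ℕ → ℕ,
      (∃ s, IsPartOf n s ∧ x = incr s 0) → (∃ s, IsPartOf n s ∧ y = incr s 0) →
      IsSupOn (n + 1) x y z → ∃ s, IsPartOf n s ∧ z = incr s 0) := by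
  refine ⟨fun a b c ha hb hc => isSupOn_incr hn ha hb hc, ?_, ?_⟩
  · rintro x y z ⟨s, hs, rfl⟩ ⟨t, ht, rfl⟩ hz
    refine ⟨domInf s t, hs.domInf ht, ?_⟩
    rw [hz.eq_domInf hs.incr_zero ht.incr_zero, incr_domInf]
  · rintro x y z ⟨s, hs, rfl⟩ ⟨t, ht, rfl⟩ hz
    exact exists_eq_incr_of_isSupOn hn hs ht hz
end

section
/- Let s be a partition having a slippery step at 1 and let t be the partition with s →_1 t (the slip from column 1). Then s^{↓1} →_1 s^{↓2}, s^{↓2} →_2 t^{↓1}, and dirreach(s^{↓1}) = (dirreach(s)^{↓1} \ {t^{↓1}}) ∪ {s^{↓2}}. -/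
/-
Adding a grain to column `1` of `s` turns the slippery step there into a cliff, so the only
move of `s^{↓1}` from column `1` is the fall onto column `2`, replacing the slip `s →_1 t`.
All other moves happen to the right of column `1` and commute with the extra grain; they
cannot produce `t^{↓1}`, since they leave the first part equal to `s_1` while `t_1 = s_1 - 1`.
-/

section Incr

lemma incr_apply (s : ℕ → ℕ) (i j : ℕ) : incr s i j = if j = i then s i + 1 else s j :=
  Function.update_apply ..

@[simp]
lemma incr_apply_self (s : ℕ → ℕ) (i : ℕ) : incr s i i = s i + 1 := by
  simp [incr_apply]

@[simp]
lemma incr_apply_of_ne (s : ℕ → ℕ) {i j : ℕ} (h : j ≠ i) : incr s i j = s j := by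
  simp [incr_apply, h]

variable {s : ℕ → ℕ} {i b k : ℕ}

lemma moveGrain_incr_of_ne (hi : i ≠ k) (hb : b ≠ k) :
    moveGrain (incr s k) i b = incr (moveGrain s i b) k := by
  funext j
  simp only [moveGrain, incr_apply]
  split_ifs <;> subst_vars <;> omega

lemma moveGrain_incr_self (hb : b ≠ i) : moveGrain (incr s i) i b = incr s b := by
  funext j
  simp only [moveGrain, incr_apply]
  split_ifs <;> subst_vars <;> omega

lemma incr_moveGrain_self (hb : b ≠ i) (hs : 1 ≤ s i) :
    incr (moveGrain s i b) i = incr s b := by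
  funext j
  simp only [moveGrain, incr_apply]
  split_ifs <;> subst_vars <;> omega

end Incr

section Step

variable {s u v : ℕ → ℕ} {i k m m' : ℕ}

lemma cliff_incr_iff (hk : k < i) : Cliff (incr s k) i ↔ Cliff s i := by
  simp only [Cliff, incr_apply_of_ne s (show i + 1 ≠ k by omega), incr_apply_of_ne s hk.ne']

lemma slipAt_incr_iff (hk : k < i) : SlipAt (incr s k) i m ↔ SlipAt s i m := by
  have e : ∀ j, i ≤ j → incr s k j = s j := fun j hj => incr_apply_of_ne s (by omega)
  unfold SlipAt
  constructor
  · rintro ⟨hm, hplateau, hdrop⟩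
    refine ⟨hm, fun j hj hjm => ?_, ?_⟩
    · simpa only [e j (by omega), e i le_rfl] using hplateau j hj hjm
    · simpa only [e (m + 1) (by omega), e i le_rfl] using hdrop
  · rintro ⟨hm, hplateau, hdrop⟩
    refine ⟨hm, fun j hj hjm => ?_, ?_⟩
    · simpa only [e j (by omega), e i le_rfl] using hplateau j hj hjm
    · simpa only [e (m + 1) (by omega), e i le_rfl] using hdrop

lemma step_incr_iff (hk : k < i) : Step (incr s k) i v ↔ ∃ u, Step s i u ∧ v = incr u k := by
  constructor
  · rintro (⟨hc, rfl⟩ | ⟨m, hsl, rfl⟩)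
    · exact ⟨_, Or.inl ⟨(cliff_incr_iff hk).1 hc, rfl⟩, moveGrain_incr_of_ne hk.ne' (by omega)⟩
    · exact ⟨_, Or.inr ⟨m, (slipAt_incr_iff hk).1 hsl, rfl⟩,
        moveGrain_incr_of_ne hk.ne' (by have := hsl.1; omega)⟩
  · rintro ⟨u, (⟨hc, rfl⟩ | ⟨m, hsl, rfl⟩), rfl⟩
    · exact Or.inl ⟨(cliff_incr_iff hk).2 hc, (moveGrain_incr_of_ne hk.ne' (by omega)).symm⟩
    · exact Or.inr ⟨m, (slipAt_incr_iff hk).2 hsl,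
        (moveGrain_incr_of_ne hk.ne' (by have := hsl.1; omega)).symm⟩

lemma Step.apply_of_lt (h : Step s i u) (hk : k < i) : u k = s k := by
  rcases h with ⟨_, rfl⟩ | ⟨m, hsl, rfl⟩
  · simp only [moveGrain]; split_ifs <;> omega
  · have := hsl.1; simp only [moveGrain]; split_ifs <;> omega

lemma SlipAt.not_cliff (h : SlipAt s i m) : ¬ Cliff s i := by
  have := h.2.1 (i + 1) le_rfl h.1
  unfold Cliff; omega

lemma SlipAt.unique (h : SlipAt s i m) (h' : SlipAt s i m') : m' = m := by
  obtain ⟨hm, hplateau, hdrop⟩ := h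
  obtain ⟨hm', hplateau', hdrop'⟩ := h'
  by_contra hne
  rcases Nat.lt_or_gt_of_ne hne with hlt | hlt
  · have := hplateau (m' + 1) (by omega) hlt; omega
  · have := hplateau' (m + 1) (by omega) hlt; omega

lemma Step.eq_of_cliff (h : Step s i u) (hc : Cliff s i) : u = moveGrain s i (i + 1) := by
  rcases h with ⟨_, rfl⟩ | ⟨m, hsl, _⟩
  · rfl
  · exact absurd hc hsl.not_cliff

lemma Step.eq_of_slipAt (h : Step s i u) (hm : SlipAt s i m) : u = moveGrain s i (m + 1) := by
  rcases h with ⟨hc, _⟩ | ⟨m', hsl, rfl⟩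
  · exact absurd hc hm.not_cliff
  · rw [hsl.unique hm]

lemma SlipAt.cliff_incr (h : SlipAt s i m) : Cliff (incr s i) i := by
  have := h.2.1 (i + 1) le_rfl h.1
  unfold Cliff
  rw [incr_apply_of_ne s (by omega), incr_apply_self]
  omega

lemma SlipAt.step_incr (h : SlipAt s i m) : Step (incr s i) i (incr s (i + 1)) :=
  Or.inl ⟨h.cliff_incr, (moveGrain_incr_self (by omega)).symm⟩

/-- The extra grain on column `i + 1` shortens the plateau by one column: what remains is a
slippery step at `i + 1`, or a cliff when the plateau had length one. -/
lemma SlipAt.step_incr_succ (h : SlipAt s i m) :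
    Step (incr s (i + 1)) (i + 1) (incr s (m + 1)) := by
  obtain ⟨hm, hplateau, hdrop⟩ := h
  have hs : s (i + 1) + 1 = s i := hplateau (i + 1) le_rfl hm
  rcases hm.eq_or_lt with rfl | hlt
  · refine Or.inl ⟨?_, (moveGrain_incr_self (by omega)).symm⟩
    unfold Cliff
    rw [incr_apply_of_ne s (by omega), incr_apply_self]
    omega
  · refine Or.inr ⟨m, ⟨hlt, fun j hj hjm => ?_, ?_⟩, (moveGrain_incr_self (by omega)).symm⟩
    · rw [incr_apply_of_ne s (by omega), incr_apply_self]
      have := hplateau j (by omega) hjm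
      omega
    · rw [incr_apply_of_ne s (by omega), incr_apply_self]
      omega

lemma dirreach_incr_zero_of_slipAt (h : SlipAt s 0 m) :
    dirreach (incr s 0) =
      ((fun u => incr u 0) '' dirreach s \ {incr s (m + 1)}) ∪ {incr s 1} := by
  ext v
  simp only [dirreach, Set.mem_union, Set.mem_sdiff, Set.mem_image, Set.mem_singleton_iff,
    Set.mem_ofPred_eq]
  constructor
  · rintro ⟨_ | i, hv⟩
    · exact Or.inr ((hv.eq_of_cliff h.cliff_incr).trans (moveGrain_incr_self (by omega)))
    · obtain ⟨u, hu, rfl⟩ := (step_incr_iff i.succ_pos).1 hv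
      refine Or.inl ⟨⟨u, ⟨i + 1, hu⟩, rfl⟩, fun heq => ?_⟩
      have h0 := congrFun heq 0
      rw [incr_apply_self, incr_apply_of_ne s (by omega), hu.apply_of_lt i.succ_pos] at h0
      omega
  · rintro (⟨⟨u, ⟨_ | i, hu⟩, rfl⟩, hne⟩ | rfl)
    · refine absurd ?_ hne
      rw [hu.eq_of_slipAt h, incr_moveGrain_self (by omega) (by have := h.2.2; omega)]
    · exact ⟨i + 1, (step_incr_iff i.succ_pos).2 ⟨u, hu, rfl⟩⟩
    · exact ⟨0, h.step_incr⟩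

end Step

theorem stmt5_general (s t : ℕ → ℕ) (m : ℕ) (hm : SlipAt s 0 m)
    (ht : t = moveGrain s 0 (m + 1)) :
    Step (incr s 0) 0 (incr s 1) ∧ Step (incr s 1) 1 (incr t 0) ∧
    dirreach (incr s 0) =
      ((fun u => incr u 0) '' dirreach s \ {incr t 0}) ∪ {incr s 1} := by
  have ht' : incr t 0 = incr s (m + 1) := by
    rw [ht, incr_moveGrain_self (by omega) (by have := hm.2.2; omega)]
  rw [ht']
  exact ⟨hm.step_incr, hm.step_incr_succ, dirreach_incr_zero_of_slipAt hm⟩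

/-- If `s` has a slippery step at `1` and `s →_1 t` is the
slip from column `1`, then `s^{↓1} →_1 s^{↓2}`, `s^{↓2} →_2 t^{↓1}`, and
`dirreach(s^{↓1}) = (dirreach(s)^{↓1} \ {t^{↓1}}) ∪ {s^{↓2}}`. -/
theorem stmt5 (s t : ℕ → ℕ) (hs : IsPartition s) (m : ℕ) (hm : SlipAt s 0 m)
    (ht : t = moveGrain s 0 (m + 1)) :
    Step (incr s 0) 0 (incr s 1) ∧ Step (incr s 1) 1 (incr t 0) ∧
    dirreach (incr s 0) =
      ((fun u => incr u 0) '' dirreach s \ {incr t 0}) ∪ {incr s 1} :=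
  stmt5_general s t m hm ht
end

section
/- Let n ≥ 1. The map π : L_B(n) → P sending a partition (s_1, s_2, …, s_k) of n to (s_2, …, s_k) is an injective lattice embedding: for all a, b ∈ L_B(n), π(inf_{L_B(n)}(a,b)) = inf_{(P,≥_∞)}(π(a), π(b)) and π(sup_{L_B(n)}(a,b)) = sup_{(P,≥_∞)}(π(a), π(b)). -/
/-!
Both orders are read off suffix sums: on partitions of `n`, `s` dominates `t` iff
`Σ_j(s) ≤ Σ_j(t)` for all `j`, and `Σ_j(π s) = Σ_{j+1}(s)`. A sequence is the suffix-sum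
sequence of a partition iff it is nonincreasing, convex and eventually zero. The pointwise
maximum of the suffix sums of `a` and `b` is such a sequence, hence that of `inf(a, b)`;
dropping its first term gives the infimum of `π a` and `π b` in `P`.

For suprema, an upper bound `d` of `π a` and `π b` in `(P, ≥_∞)` yields an upper bound `e` of
`a` and `b` in `L_B(n)` with `d ≥_∞ π e`, so `d ≥_∞ π (sup(a, b))`. The suffix sums of `e` are
the maximum of `(n, Σ_1(d), Σ_2(d), …)` and the truncated line `j ↦ n - jσ` through its first
two terms, `σ = n - |d|`: the line restores convexity at the first term, and `σ ≥ a_1, b_1`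
keeps it below the suffix sums of `a` and `b`.
-/

section SuffixSums

variable {s : ℕ → ℕ} {N : ℕ}

lemma suff_eq_add_suff_succ (hN : ∀ i, N ≤ i → s i = 0) (j : ℕ) :
    suff s j = s j + suff s (j + 1) := by
  have hsum : Summable fun i => s (j + (i + 1)) :=
    summable_of_ne_finset_zero (s := Finset.range N) fun i hi =>
      hN _ (by rw [Finset.mem_range] at hi; omega)
  rw [suff, tsum_eq_zero_add' (f := fun i => s (j + i)) hsum]
  simp only [suff, add_zero, ← add_assoc, Nat.add_right_comm j _ 1]

lemma suff_eq_zero_of_le (hN : ∀ i, N ≤ i → s i = 0) {j : ℕ} (hj : N ≤ j) : suff s j = 0 := by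
  simp [suff, hN _ (Nat.le_add_right_of_le hj)]

lemma psum_add_suff (hN : ∀ i, N ≤ i → s i = 0) (j : ℕ) : psum s j + suff s j = suff s 0 := by
  induction j with
  | zero => simp [psum]
  | succ j ih =>
    rw [psum, Finset.sum_range_succ, ← psum, suff_eq_add_suff_succ hN j] at *
    omega

end SuffixSums

section Partition

variable {s : ℕ → ℕ}

lemma IsPartition.suff_succ_le (hs : IsPartition s) (j : ℕ) : suff s (j + 1) ≤ suff s j := by
  obtain ⟨N, hN⟩ := hs.2
  rw [suff_eq_add_suff_succ hN j]
  exact Nat.le_add_left _ _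

lemma IsPartition.suff_convex (hs : IsPartition s) (j : ℕ) :
    suff s (j + 1) + suff s (j + 1) ≤ suff s j + suff s (j + 2) := by
  obtain ⟨N, hN⟩ := hs.2
  have := hs.1 j
  have := suff_eq_add_suff_succ hN j
  have : suff s (j + 1) = s (j + 1) + suff s (j + 2) := suff_eq_add_suff_succ hN (j + 1)
  omega

lemma IsPartition.exists_suff_eq_zero (hs : IsPartition s) : ∃ N, ∀ j, N ≤ j → suff s j = 0 :=
  hs.2.imp fun _ hN _ => suff_eq_zero_of_le hN

end Partition

lemma isPartition_shift {s : ℕ → ℕ} (hs : IsPartition s) : IsPartition (shift s) :=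
  ⟨fun i => hs.1 (i + 1), hs.2.imp fun _ hN i hi => hN (i + 1) (by omega)⟩

lemma suff_shift (s : ℕ → ℕ) (j : ℕ) : suff (shift s) j = suff s (j + 1) := by
  simp only [suff, shift, Nat.add_right_comm]

lemma dom_iff_geInf {n : ℕ} {s t : ℕ → ℕ} (hs : IsPartOf n s) (ht : IsPartOf n t) :
    Dom s t ↔ GeInf s t := by
  obtain ⟨⟨-, Ns, hNs⟩, hs0⟩ := hs
  obtain ⟨⟨-, Nt, hNt⟩, ht0⟩ := ht
  refine forall_congr' fun j => ?_
  have := psum_add_suff hNs j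
  have := psum_add_suff hNt j
  omega

lemma geInf_shift_iff {s t : ℕ → ℕ} :
    GeInf (shift s) (shift t) ↔ ∀ j, suff s (j + 1) ≤ suff t (j + 1) := by
  simp only [GeInf, suff_shift]

lemma eq_of_shift_eq {n : ℕ} {a b : ℕ → ℕ} (ha : IsPartOf n a) (hb : IsPartOf n b)
    (hab : shift a = shift b) : a = b := by
  obtain ⟨⟨-, Na, hNa⟩, ha0⟩ := ha
  obtain ⟨⟨-, Nb, hNb⟩, hb0⟩ := hb
  have h1 : suff a 1 = suff b 1 := by simpa only [suff_shift] using congrArg (suff · 0) hab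
  have : suff a 0 = a 0 + suff a 1 := suff_eq_add_suff_succ hNa 0
  have : suff b 0 = b 0 + suff b 1 := suff_eq_add_suff_succ hNb 0
  funext i
  cases i with
  | zero => omega
  | succ i => exact congrFun hab i

lemma exists_isPartition_suff_eq {E : ℕ → ℕ} {N : ℕ} (hanti : ∀ j, E (j + 1) ≤ E j)
    (hconv : ∀ j, E (j + 1) + E (j + 1) ≤ E j + E (j + 2)) (hN : ∀ j, N ≤ j → E j = 0) :
    ∃ e, IsPartition e ∧ suff e = E := by
  obtain ⟨e, he⟩ : ∃ e : ℕ → ℕ, ∀ j, e j = E j - E (j + 1) := ⟨_, fun _ => rfl⟩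
  have heN : ∀ i, N ≤ i → e i = 0 := fun i hi => by rw [he, hN i hi, hN (i + 1) (by omega)]
  have hpsum : ∀ j, psum e j + E j = E 0 := by
    intro j
    induction j with
    | zero => simp [psum]
    | succ j ih =>
      have := hanti j
      rw [psum, Finset.sum_range_succ, ← psum, he]
      omega
  refine ⟨e, ⟨fun i => ?_, N, heN⟩, funext fun j => ?_⟩
  · have := hconv i
    have := hanti i
    have : E (i + 2) ≤ E (i + 1) := hanti (i + 1)
    rw [he, he]
    show E (i + 1) - E (i + 2) ≤ E i - E (i + 1)
    omega
  · have := psum_add_suff heN j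
    have := psum_add_suff heN N
    have := hpsum j
    have := hpsum N
    rw [suff_eq_zero_of_le heN le_rfl, hN N le_rfl] at *
    omega

lemma exists_isPartOf_suff_eq_max {n : ℕ} {a b : ℕ → ℕ} (ha : IsPartOf n a) (hb : IsPartOf n b) :
    ∃ e, IsPartOf n e ∧ ∀ j, suff e j = max (suff a j) (suff b j) := by
  obtain ⟨Na, hNa⟩ := ha.1.exists_suff_eq_zero
  obtain ⟨Nb, hNb⟩ := hb.1.exists_suff_eq_zero
  obtain ⟨e, he, hsuff⟩ := exists_isPartition_suff_eq (E := fun j => max (suff a j) (suff b j))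
    (fun j => max_le_max (ha.1.suff_succ_le j) (hb.1.suff_succ_le j))
    (fun j => by have := ha.1.suff_convex j; have := hb.1.suff_convex j; omega)
    (N := max Na Nb) (fun j hj => by rw [hNa j (by omega), hNb j (by omega), max_self])
  exact ⟨e, ⟨he, by simp only [hsuff, ha.2, hb.2, max_self]⟩, congrFun hsuff⟩

lemma isInfP_shift {n : ℕ} {a b c : ℕ → ℕ} (ha : IsPartOf n a) (hb : IsPartOf n b)
    (hc : IsInfOn n a b c) : IsInfP (shift a) (shift b) (shift c) := by
  obtain ⟨hc, hac, hbc, hgreatest⟩ := hc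
  obtain ⟨e, he, hsuff⟩ := exists_isPartOf_suff_eq_max ha hb
  have hce : GeInf c e := (dom_iff_geInf hc he).1 <| hgreatest e he
    ((dom_iff_geInf ha he).2 fun j => hsuff j ▸ le_max_left _ _)
    ((dom_iff_geInf hb he).2 fun j => hsuff j ▸ le_max_right _ _)
  rw [dom_iff_geInf ha hc] at hac
  rw [dom_iff_geInf hb hc] at hbc
  refine ⟨isPartition_shift hc.1, geInf_shift_iff.2 fun j => hac (j + 1),
    geInf_shift_iff.2 fun j => hbc (j + 1), fun d _ had hbd j => ?_⟩
  calc suff (shift c) j = suff c (j + 1) := suff_shift c j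
    _ ≤ suff e (j + 1) := hce (j + 1)
    _ = max (suff a (j + 1)) (suff b (j + 1)) := hsuff (j + 1)
    _ ≤ suff d j := by simpa only [suff_shift] using max_le (had j) (hbd j)

lemma psum_le_mul_head {s : ℕ → ℕ} (hs : Antitone s) (j : ℕ) : psum s j ≤ j * s 0 :=
  (Finset.sum_le_card_nsmul _ _ _ fun i _ => hs (Nat.zero_le i)).trans_eq (by simp)

lemma tsub_mul_le_suff {n σ : ℕ} {a : ℕ → ℕ} (ha : IsPartOf n a) (hσ : a 0 ≤ σ) (j : ℕ) :
    n - j * σ ≤ suff a j := by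
  obtain ⟨⟨hsa, N, hN⟩, ha0⟩ := ha
  have := psum_le_mul_head (antitone_nat_of_succ_le hsa) j
  have := Nat.mul_le_mul_left j hσ
  have := psum_add_suff hN j
  omega

lemma tsub_mul_convex (n σ j : ℕ) :
    (n - (j + 1) * σ) + (n - (j + 1) * σ) ≤ (n - j * σ) + (n - (j + 2) * σ) := by
  simp only [add_mul, one_mul]
  omega

lemma head_add_suff_le {n : ℕ} {s d : ℕ → ℕ} (hs : IsPartOf n s) (hds : GeInf d (shift s)) :
    s 0 + suff d 0 ≤ n := by
  obtain ⟨⟨-, N, hN⟩, hs0⟩ := hs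
  have := hds 0
  rw [suff_shift] at this
  have := suff_eq_add_suff_succ hN 0
  omega

noncomputable def liftSuff (d : ℕ → ℕ) (n σ : ℕ) : ℕ → ℕ
  | 0 => n
  | j + 1 => max (suff d j) (n - (j + 1) * σ)

section LiftSuff

variable {d : ℕ → ℕ} {n σ : ℕ}

lemma liftSuff_le_suff (hσ : suff d 0 + σ = n) {s : ℕ → ℕ} (hs : IsPartOf n s)
    (hds : GeInf d (shift s)) (j : ℕ) : liftSuff d n σ j ≤ suff s j := by
  cases j with
  | zero => exact hs.2.ge
  | succ j =>
    have hσs : s 0 ≤ σ := by have := head_add_suff_le hs hds; omega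
    rw [liftSuff, ← suff_shift]
    exact max_le (hds j) (suff_shift s j ▸ tsub_mul_le_suff hs hσs (j + 1))

lemma liftSuff_succ_le (hd : IsPartition d) (hσ : suff d 0 + σ = n) (j : ℕ) :
    liftSuff d n σ (j + 1) ≤ liftSuff d n σ j := by
  cases j with
  | zero =>
    simp only [liftSuff]
    exact max_le (by omega) (Nat.sub_le _ _)
  | succ j =>
    exact max_le_max (hd.suff_succ_le j)
      (Nat.sub_le_sub_left (Nat.mul_le_mul_right _ (by omega)) _)

lemma liftSuff_convex (hd : IsPartition d) (hσ : suff d 0 + σ = n) (j : ℕ) :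
    liftSuff d n σ (j + 1) + liftSuff d n σ (j + 1) ≤
      liftSuff d n σ j + liftSuff d n σ (j + 2) := by
  cases j with
  | zero =>
    have := le_max_right (suff d 1) (n - 2 * σ)
    simp only [liftSuff, zero_add, one_mul, two_mul] at this ⊢
    omega
  | succ j =>
    have := hd.suff_convex j
    have := tsub_mul_convex n σ (j + 1)
    simp only [liftSuff, add_assoc, Nat.reduceAdd] at this ⊢
    omega

end LiftSuff

lemma exists_isPartOf_geInf_and_geInf_shift {n : ℕ} {a b d : ℕ → ℕ} (ha : IsPartOf n a)
    (hb : IsPartOf n b) (hd : IsPartition d) (hda : GeInf d (shift a))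
    (hdb : GeInf d (shift b)) :
    ∃ e, IsPartOf n e ∧ GeInf e a ∧ GeInf e b ∧ GeInf d (shift e) := by
  have := head_add_suff_le ha hda
  have hσ : suff d 0 + (n - suff d 0) = n := by omega
  obtain ⟨N, hN⟩ := ha.1.exists_suff_eq_zero
  obtain ⟨e, he, hsuff⟩ := exists_isPartition_suff_eq (liftSuff_succ_le hd hσ)
    (liftSuff_convex hd hσ)
    (fun j hj => Nat.eq_zero_of_le_zero ((liftSuff_le_suff hσ ha hda j).trans (hN j hj).le))
  refine ⟨e, ⟨he, by rw [hsuff, liftSuff]⟩, fun j => hsuff ▸ liftSuff_le_suff hσ ha hda j,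
    fun j => hsuff ▸ liftSuff_le_suff hσ hb hdb j, fun j => ?_⟩
  rw [suff_shift, hsuff, liftSuff]
  exact le_max_left _ _

lemma isSupP_shift {n : ℕ} {a b c : ℕ → ℕ} (ha : IsPartOf n a) (hb : IsPartOf n b)
    (hc : IsSupOn n a b c) : IsSupP (shift a) (shift b) (shift c) := by
  obtain ⟨hc, hca, hcb, hleast⟩ := hc
  rw [dom_iff_geInf hc ha] at hca
  rw [dom_iff_geInf hc hb] at hcb
  refine ⟨isPartition_shift hc.1, geInf_shift_iff.2 fun j => hca (j + 1),
    geInf_shift_iff.2 fun j => hcb (j + 1), fun d hd hda hdb j => ?_⟩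
  obtain ⟨e, he, hea, heb, hde⟩ := exists_isPartOf_geInf_and_geInf_shift ha hb hd hda hdb
  have hec : GeInf e c := (dom_iff_geInf he hc).1 <|
    hleast e he ((dom_iff_geInf he ha).2 hea) ((dom_iff_geInf he hb).2 heb)
  exact (hde j).trans (by simpa only [suff_shift] using hec (j + 1))

theorem stmt13_general (n : ℕ) :
    (∀ a, IsPartOf n a → IsPartition (shift a)) ∧
    (∀ a b : ℕ → ℕ, IsPartOf n a → IsPartOf n b → shift a = shift b → a = b) ∧
    (∀ a b c : ℕ → ℕ, IsPartOf n a → IsPartOf n b → IsInfOn n a b c →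
      IsInfP (shift a) (shift b) (shift c)) ∧
    (∀ a b c : ℕ → ℕ, IsPartOf n a → IsPartOf n b → IsSupOn n a b c →
      IsSupP (shift a) (shift b) (shift c)) :=
  ⟨fun _ ha => isPartition_shift ha.1, fun _ _ => eq_of_shift_eq, fun _ _ _ => isInfP_shift,
    fun _ _ _ => isSupP_shift⟩

/-- For `n ≥ 1`, the map `π : L_B(n) → P`,
`(s_1, s_2, …) ↦ (s_2, …)`, is an injective lattice embedding: it maps
partitions of `n` to elements of `P`, is injective on `L_B(n)`, and sends
infima (resp. suprema) in `L_B(n)` to infima (resp. suprema) in `(P, ≥_∞)`. -/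
theorem stmt13 (n : ℕ) (hn : 1 ≤ n) :
    (∀ a, IsPartOf n a → IsPartition (shift a)) ∧
    (∀ a b : ℕ → ℕ, IsPartOf n a → IsPartOf n b → shift a = shift b → a = b) ∧
    (∀ a b c : ℕ → ℕ, IsPartOf n a → IsPartOf n b → IsInfOn n a b c →
      IsInfP (shift a) (shift b) (shift c)) ∧
    (∀ a b c : ℕ → ℕ, IsPartOf n a → IsPartOf n b → IsSupOn n a b c →
      IsSupP (shift a) (shift b) (shift c)) :=
  stmt13_general n
end

section
/- Let s, t ∈ P with |s| = |t| = n. Then |inf_{(P,≥_∞)}(s,t)| = n and |sup_{(P,≥_∞)}(s,t)| = n; consequently, for every n the set of partitions of n is a sublattice of (P, ≥_∞) (on which the restriction of ≥_∞ coincides with the dominance order on partitions of n). -/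
/-!
The total `|s| = Σ_1(s)` is itself one of the suffix sums compared by `≥_∞`. Every partition `s`
of `n` satisfies `Σ_j(s) ≤ n - (j - 1)`, so the single column `1^n` lies `≥_∞`-below it, and the
single row `(n)` lies `≥_∞`-above it. Hence the infimum `u` of two partitions of `n` is squeezed
between them: `n ≤ |u|` because `s ≥_∞ u`, and `|u| ≤ n` because `u ≥_∞ 1^n`; dually for the
supremum. On partitions of a fixed `n`, `Σ_{j+1} = n - (s_1 + ⋯ + s_j)`, which turns `≥_∞` into
dominance.
-/

def colPart (n : ℕ) : ℕ → ℕ := fun i => if i < n then 1 else 0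

def rowPart (n : ℕ) : ℕ → ℕ := fun i => if i = 0 then n else 0

section SuffixSums

variable {s : ℕ → ℕ}

lemma suff_eq_sum_range {j N : ℕ} (hN : ∀ i, N ≤ i → s (j + i) = 0) :
    suff s j = ∑ i ∈ Finset.range N, s (j + i) :=
  tsum_eq_sum fun i hi => hN _ (by rw [Finset.mem_range] at hi; omega)

lemma suff_add_psum (hs : ∃ N, ∀ i, N ≤ i → s i = 0) (j : ℕ) :
    suff s j + psum s j = suff s 0 := by
  obtain ⟨N, hN⟩ := hs
  rw [suff_eq_sum_range (N := N) (fun i hi => hN _ (by omega)),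
    suff_eq_sum_range (N := j + N) (fun i hi => hN _ (by omega)),
    Finset.sum_range_add, psum]
  simp only [zero_add]
  ring

lemma IsPartition.suff_le_suff_zero_sub (hs : IsPartition s) (j : ℕ) :
    suff s j ≤ suff s 0 - j := by
  have hanti : Antitone s := antitone_nat_of_succ_le hs.1
  by_cases hj : s j = 0
  · have : suff s j = 0 := by
      simp only [suff]
      rw [tsum_congr fun i => Nat.eq_zero_of_le_zero (hj ▸ hanti (Nat.le_add_right j i)), tsum_zero]
    omega
  · have hpsum : j ≤ psum s j := by
      calc j = ∑ _k ∈ Finset.range j, 1 := by simp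
        _ ≤ psum s j := Finset.sum_le_sum fun k hk =>
            le_trans (Nat.one_le_iff_ne_zero.mpr hj) (hanti (Finset.mem_range.mp hk).le)
    have := suff_add_psum hs.2 j
    omega

end SuffixSums

lemma isPartition_colPart (n : ℕ) : IsPartition (colPart n) :=
  ⟨fun i => by simp only [colPart]; split_ifs <;> omega,
    n, fun i hi => by simp only [colPart]; split_ifs <;> omega⟩

lemma suff_colPart (n j : ℕ) : suff (colPart n) j = n - j := by
  rw [suff_eq_sum_range (N := n - j) (fun i hi => by simp only [colPart]; split_ifs <;> omega)]
  calc ∑ i ∈ Finset.range (n - j), colPart n (j + i) = ∑ _i ∈ Finset.range (n - j), 1 :=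
        Finset.sum_congr rfl fun i hi => by
          simp only [Finset.mem_range] at hi; simp only [colPart]; split_ifs <;> omega
    _ = n - j := by simp

lemma isPartition_rowPart (n : ℕ) : IsPartition (rowPart n) :=
  ⟨fun i => by simp only [rowPart, Nat.add_one_ne_zero, if_false]; exact Nat.zero_le _,
    1, fun i hi => by simp only [rowPart]; split_ifs <;> omega⟩

lemma suff_rowPart (n j : ℕ) : suff (rowPart n) j = if j = 0 then n else 0 := by
  rw [suff_eq_sum_range (N := 1) (fun i hi => by simp only [rowPart]; split_ifs <;> omega)]
  simp [rowPart]

lemma IsPartition.geInf_colPart {s : ℕ → ℕ} (hs : IsPartition s) :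
    GeInf s (colPart (suff s 0)) := fun j => by
  rw [suff_colPart]
  exact hs.suff_le_suff_zero_sub j

lemma rowPart_geInf (s : ℕ → ℕ) : GeInf (rowPart (suff s 0)) s := fun j => by
  rw [suff_rowPart]
  split_ifs with hj
  · rw [hj]
  · exact Nat.zero_le _

section LatticeOperations

variable {s t u : ℕ → ℕ}

lemma IsInfP.suff_zero_eq (hs : IsPartition s) (ht : IsPartition t) (hst : suff s 0 = suff t 0)
    (hu : IsInfP s t u) : suff u 0 = suff s 0 := by
  obtain ⟨-, hsu, -, hmax⟩ := hu
  have hcol := hmax _ (isPartition_colPart (suff s 0)) hs.geInf_colPart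
    (hst ▸ ht.geInf_colPart) 0
  rw [suff_colPart] at hcol
  exact le_antisymm hcol (hsu 0)

lemma IsSupP.suff_zero_eq (hst : suff s 0 = suff t 0) (hu : IsSupP s t u) :
    suff u 0 = suff s 0 := by
  obtain ⟨-, hus, -, hmin⟩ := hu
  have hrow := hmin _ (isPartition_rowPart (suff s 0)) (rowPart_geInf s)
    (hst ▸ rowPart_geInf t) 0
  rw [suff_rowPart, if_pos rfl] at hrow
  exact le_antisymm (hus 0) hrow

lemma geInf_iff_dom (hs : IsPartition s) (ht : IsPartition t) (hst : suff s 0 = suff t 0) :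
    GeInf s t ↔ Dom s t := by
  refine forall_congr' fun j => ?_
  have := suff_add_psum hs.2 j
  have := suff_add_psum ht.2 j
  omega

end LatticeOperations

/-- If `|s| = |t| = n` then the infimum and supremum of `s`
and `t` in `(P, ≥_∞)` also have total sum `n`; consequently the partitions of
`n` form a sublattice of `(P, ≥_∞)`, on which `≥_∞` coincides with the
dominance order. -/
theorem stmt16 (n : ℕ) :
    (∀ s t u : ℕ → ℕ, IsPartition s → IsPartition t → suff s 0 = n →
      suff t 0 = n → IsInfP s t u → suff u 0 = n) ∧
    (∀ s t u : ℕ → ℕ, IsPartition s → IsPartition t → suff s 0 = n →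
      suff t 0 = n → IsSupP s t u → suff u 0 = n) ∧
    (∀ s t : ℕ → ℕ, IsPartition s → IsPartition t → suff s 0 = n →
      suff t 0 = n → (GeInf s t ↔ Dom s t)) := by
  refine ⟨?_, ?_, ?_⟩
  · rintro s t u hs ht rfl hst hu
    exact hu.suff_zero_eq hs ht hst.symm
  · rintro s t u - - rfl hst hu
    exact hu.suff_zero_eq hst.symm
  · rintro s t hs ht rfl hst
    exact geInf_iff_dom hs ht hst.symm
end
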